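/- Let ρ, σ, τ be density matrices on ℂ^n and let ε ≥ 0. If Δ(σ,τ) ≤ ε, then F(ρ,σ) ≥ F(ρ,τ) − √(2ε). -/

import Mathlib

open Matrix Filter
open scoped Kronecker ComplexOrder

noncomputable section

/-- The positive semidefinite square root of a matrix, extended by `0` to all matrices. -/
noncomputable def msqrt {n : Type*} [Fintype n] [DecidableEq n] (A : Matrix n n ℂ) :
    Matrix n n ℂ :=
  open scoped Classical in
  if h : A.PosSemidef then
    (h.1.eigenvectorUnitary : Matrix n n ℂ) *
      diagonal (fun i => ((Real.sqrt (h.1.eigenvalues i) : ℝ) : ℂ)) *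
      (star h.1.eigenvectorUnitary : Matrix n n ℂ)
  else 0

/-- A density matrix: positive semidefinite with trace one. -/
def IsDensityMatrix {n : Type*} [Fintype n] [DecidableEq n] (ρ : Matrix n n ℂ) : Prop :=
  ρ.PosSemidef ∧ ρ.trace = 1

/-- The fidelity `F(ρ,σ) = Tr √(√ρ σ √ρ)` of two (density) matrices. -/
noncomputable def Fid {n : Type*} [Fintype n] [DecidableEq n] (ρ σ : Matrix n n ℂ) : ℝ :=
  ((msqrt (msqrt ρ * σ * msqrt ρ)).trace).re

/-- The trace distance `Δ(ρ,σ) = (1/2) Tr √((ρ-σ)† (ρ-σ))`. -/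
noncomputable def trDist {n : Type*} [Fintype n] [DecidableEq n] (ρ σ : Matrix n n ℂ) : ℝ :=
  (1 / 2) * ((msqrt ((ρ - σ)ᴴ * (ρ - σ))).trace).re

/-- A quantum channel: a linear map admitting a Kraus representation. -/
def IsQuantumChannel {m n : Type*} [Fintype m] [Fintype n] [DecidableEq m] [DecidableEq n]
    (Λ : Matrix m m ℂ →ₗ[ℂ] Matrix n n ℂ) : Prop :=
  ∃ (N : ℕ) (K : Fin N → Matrix n m ℂ),
    (∀ X, Λ X = ∑ i, K i * X * (K i)ᴴ) ∧ (∑ i, (K i)ᴴ * K i = 1)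

/-- The permutation matrix `P_π` on `(ℂ^d)^{⊗k}`. -/
def permMat (d k : ℕ) (π : Equiv.Perm (Fin k)) :
    Matrix (Fin k → Fin d) (Fin k → Fin d) ℂ :=
  Matrix.of fun f g => if f = g ∘ π then 1 else 0

/-- The orthogonal projector `Π⁺_k` onto the symmetric subspace of `(ℂ^d)^{⊗k}`. -/
noncomputable def symProj (d k : ℕ) : Matrix (Fin k → Fin d) (Fin k → Fin d) ℂ :=
  ((k.factorial : ℂ))⁻¹ • ∑ π : Equiv.Perm (Fin k), permMat d k π

/-- Combine a value for the first tensor factor with values for the remaining factors. -/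
def extendFirst {d k : ℕ} (a : Fin d) (h : {i : Fin k // (i : ℕ) ≠ 0} → Fin d) :
    Fin k → Fin d :=
  fun i => if hi : (i : ℕ) = 0 then a else h ⟨i, hi⟩

/-- The partial trace over the tensor factors `2,…,k` of a matrix on `(ℂ^d)^{⊗k}`. -/
noncomputable def ptrRest {d k : ℕ}
    (W : Matrix (Fin k → Fin d) (Fin k → Fin d) ℂ) : Matrix (Fin d) (Fin d) ℂ :=
  Matrix.of fun a a' =>
    ∑ h : {i : Fin k // (i : ℕ) ≠ 0} → Fin d, W (extendFirst a h) (extendFirst a' h)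

/-- A `k`-Bose-symmetric extendible channel on `d×d` matrices. -/
def IsBoseSymExtendible (d k : ℕ)
    (Λ : Matrix (Fin d) (Fin d) ℂ →ₗ[ℂ] Matrix (Fin d) (Fin d) ℂ) : Prop :=
  ∃ V : Matrix (Fin d) (Fin d) ℂ →ₗ[ℂ] Matrix (Fin k → Fin d) (Fin k → Fin d) ℂ,
    IsQuantumChannel V ∧ (∀ X, symProj d k * V X * symProj d k = V X) ∧
    (∀ X, Λ X = ptrRest (V X))

/-- An entanglement-breaking (measure-and-prepare) channel on `d×d` matrices. -/
def IsEBChannel (d : ℕ)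
    (Λ : Matrix (Fin d) (Fin d) ℂ →ₗ[ℂ] Matrix (Fin d) (Fin d) ℂ) : Prop :=
  ∃ (N : ℕ) (M : Fin N → Matrix (Fin d) (Fin d) ℂ) (β : Fin N → (Fin d → ℂ)),
    (∀ y, (M y).PosSemidef) ∧ (∑ y, M y = 1) ∧ (∀ y, star (β y) ⬝ᵥ β y = 1) ∧
    (∀ X, Λ X = ∑ y, ((M y * X).trace) • vecMulVec (β y) (star (β y)))

/-- `(id_A ⊗ Λ)[ρ]`: a map acting on the `B` tensor factor of a bipartite matrix. -/
noncomputable def idTensor {dA dB dB' : ℕ}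
    (Λ : Matrix (Fin dB) (Fin dB) ℂ →ₗ[ℂ] Matrix (Fin dB') (Fin dB') ℂ)
    (ρ : Matrix (Fin dA × Fin dB) (Fin dA × Fin dB) ℂ) :
    Matrix (Fin dA × Fin dB') (Fin dA × Fin dB') ℂ :=
  Matrix.of fun p q => Λ (Matrix.of fun b b' => ρ (p.1, b) (q.1, b')) p.2 q.2

/-- `(Γ ⊗ id_B)[ρ]`: a map acting on the `A` tensor factor of a bipartite matrix. -/
noncomputable def tensorId {dA dA' dB : ℕ}
    (Γ : Matrix (Fin dA) (Fin dA) ℂ →ₗ[ℂ] Matrix (Fin dA') (Fin dA') ℂ)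
    (ρ : Matrix (Fin dA × Fin dB) (Fin dA × Fin dB) ℂ) :
    Matrix (Fin dA' × Fin dB) (Fin dA' × Fin dB) ℂ :=
  Matrix.of fun p q => Γ (Matrix.of fun a a' => ρ (a, p.2) (a', q.2)) p.1 q.1

/-- Supremum of `F(ρ, (id ⊗ Λ)[ρ])` over `k`-Bose-symmetric extendible channels `Λ`. -/
noncomputable def symSup (dA dB k : ℕ)
    (ρ : Matrix (Fin dA × Fin dB) (Fin dA × Fin dB) ℂ) : ℝ :=
  sSup {x : ℝ | ∃ Λ, IsBoseSymExtendible dB k Λ ∧ x = Fid ρ (idTensor Λ ρ)}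

/-- Supremum of `F(ρ, (id ⊗ Λ)[ρ])` over entanglement-breaking channels `Λ`. -/
noncomputable def ebSup (dA dB : ℕ)
    (ρ : Matrix (Fin dA × Fin dB) (Fin dA × Fin dB) ℂ) : ℝ :=
  sSup {x : ℝ | ∃ Λ, IsEBChannel dB Λ ∧ x = Fid ρ (idTensor Λ ρ)}

/-- A quantum-classical bipartite state. -/
def IsQuantumClassical {dA dB : ℕ}
    (ρ : Matrix (Fin dA × Fin dB) (Fin dA × Fin dB) ℂ) : Prop :=
  ∃ (N : ℕ) (p : Fin N → ℝ) (σ : Fin N → Matrix (Fin dA) (Fin dA) ℂ)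
    (b : Fin N → (Fin dB → ℂ)),
    (∀ i, 0 ≤ p i) ∧ (∑ i, p i = 1) ∧ (∀ i, IsDensityMatrix (σ i)) ∧
    (∀ i j, star (b i) ⬝ᵥ b j = if i = j then 1 else 0) ∧
    ρ = ∑ i, (p i : ℂ) • (σ i ⊗ₖ vecMulVec (b i) (star (b i)))

/-- The Choi matrix `J(Λ) = ∑_{x,x'} |x⟩⟨x'| ⊗ Λ(|x⟩⟨x'|)`. -/
noncomputable def choiMatrix {d : ℕ} {Y : Type*} [Fintype Y] [DecidableEq Y]
    (Λ : Matrix (Fin d) (Fin d) ℂ →ₗ[ℂ] Matrix Y Y ℂ) :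
    Matrix (Fin d × Y) (Fin d × Y) ℂ :=
  Matrix.of fun p q => Λ (Matrix.single p.1 q.1 1) p.2 q.2

/-- A `k`-Bose-symmetric extension (on the output system) of a matrix on `ℂ^d ⊗ ℂ^d`. -/
def HasBoseSymExtension {d : ℕ} (k : ℕ)
    (W : Matrix (Fin d × Fin d) (Fin d × Fin d) ℂ) : Prop :=
  ∃ Wt : Matrix (Fin d × (Fin k → Fin d)) (Fin d × (Fin k → Fin d)) ℂ,
    Wt.PosSemidef ∧
    ((1 : Matrix (Fin d) (Fin d) ℂ) ⊗ₖ symProj d k) * Wt *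
        ((1 : Matrix (Fin d) (Fin d) ℂ) ⊗ₖ symProj d k) = Wt ∧
    (∀ x x' b b', W (x, b) (x', b') =
      ∑ h : {i : Fin k // (i : ℕ) ≠ 0} → Fin d,
        Wt (x, extendFirst b h) (x', extendFirst b' h))

/-- The `k`-fold tensor power of a vector in `ℂ^d`. -/
def vecPow {d : ℕ} (k : ℕ) (v : Fin d → ℂ) : (Fin k → Fin d) → ℂ :=
  fun f => ∏ i, v (f i)

end

-- Auxiliary development: trace norm machinery.
noncomputable section Aux
namespace Stmt3Aux
open Matrix Complex

variable {m : Type*} [Fintype m] [DecidableEq m]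
set_option linter.unusedSectionVars false

/-- trace norm -/
noncomputable def tnorm (X : Matrix m m ℂ) : ℝ := ((msqrt (Xᴴ * X)).trace).re

/-- frobenius norm -/
noncomputable def fnorm (X : Matrix m m ℂ) : ℝ := Real.sqrt (((Xᴴ * X).trace).re)

lemma msqrt_eq {P : Matrix m m ℂ} (hP : P.PosSemidef) : msqrt P =
    (hP.1.eigenvectorUnitary : Matrix m m ℂ) *
      diagonal (fun i => ((Real.sqrt (hP.1.eigenvalues i) : ℝ) : ℂ)) *
      (star hP.1.eigenvectorUnitary : Matrix m m ℂ) := by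
  rw [msqrt]; exact dif_pos hP

/-- squared norm of a complex vector -/
lemma re_dot_self_nonneg (v : m → ℂ) : 0 ≤ (star v ⬝ᵥ v).re := by
  have h : star v ⬝ᵥ v = ∑ j, (Complex.normSq (v j) : ℂ) := by
    simp [dotProduct, Complex.normSq_eq_conj_mul_self]
  rw [h, Complex.re_sum]
  exact Finset.sum_nonneg fun j _ => by simp [Complex.normSq_nonneg]

noncomputable def cnorm (v : m → ℂ) : ℝ := Real.sqrt ((star v ⬝ᵥ v).re)

lemma cnorm_nonneg (v : m → ℂ) : 0 ≤ cnorm v := Real.sqrt_nonneg _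

lemma cnorm_sq (v : m → ℂ) : cnorm v ^ 2 = (star v ⬝ᵥ v).re := by
  rw [cnorm, Real.sq_sqrt (re_dot_self_nonneg v)]

/-- Cauchy-Schwarz for complex dot products -/
lemma abs_dot_le (u v : m → ℂ) : ‖star u ⬝ᵥ v‖ ≤ cnorm u * cnorm v := by
  have h := norm_inner_le_norm (𝕜 := ℂ) ((WithLp.equiv 2 (m → ℂ)).symm u)
    ((WithLp.equiv 2 (m → ℂ)).symm v)
  rw [show inner ℂ ((WithLp.equiv 2 (m → ℂ)).symm u) ((WithLp.equiv 2 (m → ℂ)).symm v) =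
    star u ⬝ᵥ v from by
      rw [WithLp.equiv_symm_apply, EuclideanSpace.inner_toLp_toLp, dotProduct_comm]] at h
  have hu : ‖(WithLp.equiv 2 (m → ℂ)).symm u‖ = cnorm u := by
    rw [norm_eq_sqrt_re_inner (𝕜 := ℂ), WithLp.equiv_symm_apply, EuclideanSpace.inner_toLp_toLp,
      dotProduct_comm]; rfl
  have hv : ‖(WithLp.equiv 2 (m → ℂ)).symm v‖ = cnorm v := by
    rw [norm_eq_sqrt_re_inner (𝕜 := ℂ), WithLp.equiv_symm_apply, EuclideanSpace.inner_toLp_toLp,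
      dotProduct_comm]; rfl
  rw [hu, hv] at h; exact h

lemma re_dot_le (u v : m → ℂ) : (star u ⬝ᵥ v).re ≤ cnorm u * cnorm v :=
  le_trans (Complex.re_le_norm _) (abs_dot_le u v)


/-- diagonal entry after conjugation = quadratic form on a column -/
lemma conj_entry (M V : Matrix m m ℂ) (i : m) :
    (Vᴴ * M * V) i i = star (Vᵀ i) ⬝ᵥ (M *ᵥ Vᵀ i) := by
  simp only [mul_apply, conjTranspose_apply, mulVec, dotProduct, transpose_apply, Pi.star_apply,
    Finset.mul_sum, Finset.sum_mul]
  rw [Finset.sum_comm]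
  exact Finset.sum_congr rfl fun j _ => Finset.sum_congr rfl fun k _ => by ring

section Unitary
variable {A : Matrix m m ℂ} (hA : A.IsHermitian)

lemma V_conj_mul : (hA.eigenvectorUnitary : Matrix m m ℂ)ᴴ *
    (hA.eigenvectorUnitary : Matrix m m ℂ) = 1 := by
  rw [← star_eq_conjTranspose]
  exact mem_unitaryGroup_iff'.mp (hA.eigenvectorUnitary).2

lemma V_mul_conj : (hA.eigenvectorUnitary : Matrix m m ℂ) *
    (hA.eigenvectorUnitary : Matrix m m ℂ)ᴴ = 1 := by
  rw [← star_eq_conjTranspose]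
  exact mem_unitaryGroup_iff.mp (hA.eigenvectorUnitary).2

lemma spectral_conj : (hA.eigenvectorUnitary : Matrix m m ℂ)ᴴ * A *
    (hA.eigenvectorUnitary : Matrix m m ℂ) = diagonal (Complex.ofReal ∘ hA.eigenvalues) := by
  rw [← star_eq_conjTranspose]
  have := hA.conjStarAlgAut_star_eigenvectorUnitary
  rw [Unitary.conjStarAlgAut_apply, Unitary.coe_star, star_star] at this
  exact this

lemma spectral_decomp : A = (hA.eigenvectorUnitary : Matrix m m ℂ) *
    diagonal (Complex.ofReal ∘ hA.eigenvalues) * (hA.eigenvectorUnitary : Matrix m m ℂ)ᴴ := by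
  rw [← star_eq_conjTranspose]
  exact hA.spectral_theorem

lemma col_dot_one (i : m) :
    star ((hA.eigenvectorUnitary : Matrix m m ℂ)ᵀ i) ⬝ᵥ
      ((hA.eigenvectorUnitary : Matrix m m ℂ)ᵀ i) = 1 := by
  have h := conj_entry (1 : Matrix m m ℂ) (hA.eigenvectorUnitary : Matrix m m ℂ) i
  rw [mul_one, V_conj_mul hA, one_mulVec] at h
  rw [← h, one_apply_eq]

lemma col_dot_eig (i : m) :
    star ((hA.eigenvectorUnitary : Matrix m m ℂ)ᵀ i) ⬝ᵥ
      (A *ᵥ (hA.eigenvectorUnitary : Matrix m m ℂ)ᵀ i) = (hA.eigenvalues i : ℂ) := by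
  have h := conj_entry A (hA.eigenvectorUnitary : Matrix m m ℂ) i
  rw [spectral_conj hA] at h
  rw [← h, diagonal_apply_eq, Function.comp_apply]

lemma trace_conj (M : Matrix m m ℂ) :
    ((hA.eigenvectorUnitary : Matrix m m ℂ)ᴴ * M *
      (hA.eigenvectorUnitary : Matrix m m ℂ)).trace = M.trace := by
  rw [trace_mul_cycle, V_mul_conj hA, one_mul]

end Unitary

lemma dot_mulVec_self (X : Matrix m m ℂ) (c : m → ℂ) :
    star (X *ᵥ c) ⬝ᵥ (X *ᵥ c) = star c ⬝ᵥ ((Xᴴ * X) *ᵥ c) := by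
  rw [star_mulVec, dotProduct_mulVec, vecMul_vecMul, dotProduct_mulVec]

lemma cnorm_mulVec_col (X : Matrix m m ℂ) (i : m) :
    cnorm (X *ᵥ (((posSemidef_conjTranspose_mul_self X).1.eigenvectorUnitary :
      Matrix m m ℂ)ᵀ i)) =
    Real.sqrt ((posSemidef_conjTranspose_mul_self X).1.eigenvalues i) := by
  rw [cnorm, dot_mulVec_self, col_dot_eig]
  simp

lemma cnorm_conj_mulVec_le {W : Matrix m m ℂ} (hW : (1 - W * Wᴴ).PosSemidef) (v : m → ℂ) :
    cnorm (Wᴴ *ᵥ v) ≤ cnorm v := by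
  apply Real.sqrt_le_sqrt
  have h0 := hW.re_dotProduct_nonneg v
  rw [sub_mulVec, one_mulVec, dotProduct_sub, map_sub] at h0
  simp only [RCLike.re_to_complex] at h0
  have he : star (Wᴴ *ᵥ v) ⬝ᵥ (Wᴴ *ᵥ v) = star v ⬝ᵥ ((W * Wᴴ) *ᵥ v) := by
    rw [dot_mulVec_self, conjTranspose_conjTranspose]
  rw [he]; linarith

lemma trace_re_sum (M : Matrix m m ℂ) : (M.trace).re = ∑ i, (M i i).re := by
  rw [Matrix.trace, Complex.re_sum]; rfl

lemma tnorm_eq_sum (X : Matrix m m ℂ) :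
    tnorm X = ∑ i, Real.sqrt ((posSemidef_conjTranspose_mul_self X).1.eigenvalues i) := by
  set h := posSemidef_conjTranspose_mul_self X
  rw [tnorm, msqrt_eq h]
  have hs : (h.1.eigenvectorUnitary : Matrix m m ℂ) *
      diagonal (fun i => ((Real.sqrt (h.1.eigenvalues i) : ℝ) : ℂ)) *
      (star h.1.eigenvectorUnitary : Matrix m m ℂ) = (h.1.eigenvectorUnitary : Matrix m m ℂ) *
      diagonal (Complex.ofReal ∘ Real.sqrt ∘ h.1.eigenvalues) *
      (star h.1.eigenvectorUnitary : Matrix m m ℂ) := rfl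
  rw [hs, trace_mul_cycle, star_eq_conjTranspose, V_conj_mul h.1, one_mul,
    trace_diagonal, Complex.re_sum]
  exact Finset.sum_congr rfl fun i _ => by simp


lemma psd_diag_re_nonneg {P : Matrix m m ℂ} (hP : P.PosSemidef) (i : m) : 0 ≤ (P i i).re := by
  have h := hP.re_dotProduct_nonneg (Pi.single i 1)
  simp only [RCLike.re_to_complex] at h
  convert h using 2
  simp [dotProduct, mulVec, Pi.single_apply, Finset.sum_ite_eq]

lemma psd_trace_re_nonneg {P : Matrix m m ℂ} (hP : P.PosSemidef) : 0 ≤ (P.trace).re := by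
  rw [trace_re_sum]; exact Finset.sum_nonneg fun i _ => psd_diag_re_nonneg hP i

/-- KEY LEMMA: if `‖Wᴴ‖ ≤ 1` then `Re Tr (W X) ≤ ‖X‖₁`. -/
lemma retrace_le_tnorm (W X : Matrix m m ℂ) (hW : (1 - W * Wᴴ).PosSemidef) :
    ((W * X).trace).re ≤ tnorm X := by
  have h := posSemidef_conjTranspose_mul_self X
  have h1 : ((W * X).trace).re =
      ∑ i, (((h.1.eigenvectorUnitary : Matrix m m ℂ)ᴴ * (W * X) *
        (h.1.eigenvectorUnitary : Matrix m m ℂ)) i i).re := by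
    rw [← trace_re_sum, trace_conj h.1 (W * X)]
  rw [h1, tnorm_eq_sum]
  apply Finset.sum_le_sum
  intro i _
  rw [conj_entry]
  set c : m → ℂ := (h.1.eigenvectorUnitary : Matrix m m ℂ)ᵀ i with hc
  have e1 : (W * X) *ᵥ c = W *ᵥ (X *ᵥ c) := by rw [← mulVec_mulVec]
  have e2 : star c ⬝ᵥ (W *ᵥ (X *ᵥ c)) = star (Wᴴ *ᵥ c) ⬝ᵥ (X *ᵥ c) := by
    rw [star_mulVec, conjTranspose_conjTranspose, dotProduct_mulVec]
  rw [e1, e2]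
  calc (star (Wᴴ *ᵥ c) ⬝ᵥ (X *ᵥ c)).re
      ≤ cnorm (Wᴴ *ᵥ c) * cnorm (X *ᵥ c) := re_dot_le _ _
    _ ≤ cnorm c * cnorm (X *ᵥ c) :=
        mul_le_mul_of_nonneg_right (cnorm_conj_mulVec_le hW _) (cnorm_nonneg _)
    _ = Real.sqrt (h.1.eigenvalues i) := by
        rw [cnorm_mulVec_col]
        have hc1 : cnorm c = 1 := by rw [cnorm, hc, col_dot_one h.1]; simp
        rw [hc1, one_mul]

lemma cancel_mid {V : Matrix m m ℂ} (hVV : Vᴴ * V = 1) (M : Matrix m m ℂ) :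
    Vᴴ * (V * M) = M := by rw [← mul_assoc, hVV, one_mul]

lemma psd_conj_diag (V : Matrix m m ℂ) (g : m → ℝ) (hg : ∀ i, 0 ≤ g i) :
    (V * diagonal (fun i => (g i : ℂ)) * Vᴴ).PosSemidef :=
  (posSemidef_diagonal_iff.mpr fun i => by exact_mod_cast hg i).mul_mul_conjTranspose_same V

lemma msqrt_ctm (X : Matrix m m ℂ) :
    msqrt (Xᴴ * X) = ((posSemidef_conjTranspose_mul_self X).1.eigenvectorUnitary : Matrix m m ℂ) *
      diagonal (fun i => (Real.sqrt ((posSemidef_conjTranspose_mul_self X).1.eigenvalues i) : ℂ)) *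
      ((posSemidef_conjTranspose_mul_self X).1.eigenvectorUnitary : Matrix m m ℂ)ᴴ := by
  rw [msqrt_eq (posSemidef_conjTranspose_mul_self X)]
  rfl

/-- Polar-type decomposition: a contraction `W` with `W * X = √(XᴴX)`. -/
lemma diag_funext {f g : m → ℂ} (h : ∀ i, f i = g i) : diagonal f = diagonal g :=
  congrArg _ (funext h)

lemma sqrtE_psd {P : Matrix m m ℂ} (hP : P.PosSemidef) :
    ((hP.1.eigenvectorUnitary : Matrix m m ℂ) *
      diagonal (fun i => ((Real.sqrt (hP.1.eigenvalues i) : ℝ) : ℂ)) *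
      (star hP.1.eigenvectorUnitary : Matrix m m ℂ)).PosSemidef :=
  psd_conj_diag _ (fun i => Real.sqrt (hP.1.eigenvalues i)) fun _ => Real.sqrt_nonneg _

lemma sqrtE_mul_self {P : Matrix m m ℂ} (hP : P.PosSemidef) :
    (hP.1.eigenvectorUnitary : Matrix m m ℂ) *
      diagonal (fun i => ((Real.sqrt (hP.1.eigenvalues i) : ℝ) : ℂ)) *
      (star hP.1.eigenvectorUnitary : Matrix m m ℂ) *
    ((hP.1.eigenvectorUnitary : Matrix m m ℂ) *
      diagonal (fun i => ((Real.sqrt (hP.1.eigenvalues i) : ℝ) : ℂ)) *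
      (star hP.1.eigenvectorUnitary : Matrix m m ℂ)) = P := by
  have hUU := V_conj_mul hP.1
  rw [star_eq_conjTranspose]
  set U := (hP.1.eigenvectorUnitary : Matrix m m ℂ) with hU
  set D := diagonal (fun i => ((Real.sqrt (hP.1.eigenvalues i) : ℝ) : ℂ)) with hD
  calc U * D * Uᴴ * (U * D * Uᴴ) = U * D * (Uᴴ * U) * D * Uᴴ := by noncomm_ring
    _ = U * (D * D) * Uᴴ := by rw [hUU]; noncomm_ring
    _ = U * diagonal (Complex.ofReal ∘ hP.1.eigenvalues) * Uᴴ := by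
        rw [hD, diagonal_mul_diagonal]
        congr 1; congr 1
        exact diag_funext fun i => by
          simp only [Function.comp_apply]
          rw [← Complex.ofReal_mul, Real.mul_self_sqrt (hP.eigenvalues_nonneg i)]
    _ = P := (spectral_decomp hP.1).symm

lemma exists_polar (X : Matrix m m ℂ) : ∃ W : Matrix m m ℂ,
    (1 - W * Wᴴ).PosSemidef ∧ (1 - Wᴴ * W).PosSemidef ∧ W * X = msqrt (Xᴴ * X) := by
  have h := posSemidef_conjTranspose_mul_self X
  set lam := h.1.eigenvalues with hlam
  set V : Matrix m m ℂ := (h.1.eigenvectorUnitary : Matrix m m ℂ) with hV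
  have hVV : Vᴴ * V = 1 := V_conj_mul h.1
  have hVV' : V * Vᴴ = 1 := V_mul_conj h.1
  have hlam0 : ∀ i, 0 ≤ lam i := fun i => h.eigenvalues_nonneg i
  set f : m → ℝ := fun i => if lam i = 0 then 0 else (Real.sqrt (lam i))⁻¹ with hf
  set F : Matrix m m ℂ := diagonal (fun i => (f i : ℂ)) with hF
  set W : Matrix m m ℂ := V * F * Vᴴ * Xᴴ with hW
  have hFH : Fᴴ = F := by
    rw [hF, diagonal_conjTranspose]
    exact diag_funext fun i => by simp
  have hWH : Wᴴ = X * (V * F * Vᴴ) := by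
    rw [hW]
    simp only [conjTranspose_mul, conjTranspose_conjTranspose, hFH]
    noncomm_ring
  have hmid : Vᴴ * Xᴴ * (X * V) = diagonal (Complex.ofReal ∘ lam) := by
    calc Vᴴ * Xᴴ * (X * V) = Vᴴ * (Xᴴ * X) * V := by noncomm_ring
      _ = _ := spectral_conj h.1
  have hffl : ∀ i, f i * f i * lam i = if lam i = 0 then 0 else 1 := by
    intro i
    by_cases hl : lam i = 0
    · simp [hf, hl]
    · have hpos : 0 < lam i := lt_of_le_of_ne (hlam0 i) (Ne.symm hl)
      have hs : Real.sqrt (lam i) ≠ 0 := by positivity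
      simp only [hf, hl, if_false]
      field_simp
      exact (Real.sq_sqrt hpos.le).symm
  have hWW : W * Wᴴ = V * diagonal (fun i => ((f i * f i * lam i : ℝ) : ℂ)) * Vᴴ := by
    calc W * Wᴴ = V * F * (Vᴴ * Xᴴ * (X * V)) * F * Vᴴ := by rw [hW, hWH]; noncomm_ring
      _ = V * (F * diagonal (Complex.ofReal ∘ lam) * F) * Vᴴ := by rw [hmid]; noncomm_ring
      _ = _ := by
          rw [hF, diagonal_mul_diagonal, diagonal_mul_diagonal]
          congr 1; congr 1
          exact diag_funext fun i => by
            simp only [Function.comp_apply]; push_cast; ring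
  refine ⟨W, ?_, ?_, ?_⟩
  · have key : (1 : Matrix m m ℂ) - W * Wᴴ =
        V * diagonal (fun i => ((1 - f i * f i * lam i : ℝ) : ℂ)) * Vᴴ := by
      rw [hWW]
      have hd : diagonal (fun i => ((1 - f i * f i * lam i : ℝ) : ℂ)) =
          1 - diagonal (fun i => ((f i * f i * lam i : ℝ) : ℂ)) := by
        rw [← diagonal_one, diagonal_sub]
        exact diag_funext fun i => by push_cast; ring
      rw [hd, mul_sub, sub_mul, mul_one, hVV']
    rw [key]
    apply psd_conj_diag
    intro i
    rw [hffl i]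
    by_cases hl : lam i = 0 <;> simp [hl]
  · set Q := Wᴴ * W with hQ
    have hQH : Q.IsHermitian := (posSemidef_conjTranspose_mul_self W).1
    have hcore : V * F * Vᴴ * (V * F * Vᴴ) = V * (F * F) * Vᴴ := by
      calc V * F * Vᴴ * (V * F * Vᴴ) = V * F * (Vᴴ * V) * F * Vᴴ := by noncomm_ring
        _ = _ := by rw [hVV]; noncomm_ring
    have hQeq : Q = X * (V * (F * F) * Vᴴ) * Xᴴ := by
      rw [hQ, hWH, hW, ← hcore]; noncomm_ring
    have hFF : F * F = diagonal (fun i => ((f i * f i : ℝ) : ℂ)) := by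
      rw [hF, diagonal_mul_diagonal]
      exact diag_funext fun i => by push_cast; ring
    have hQQ : Q * Q = Q := by
      rw [hQeq, hFF]
      calc X * (V * diagonal (fun i => ((f i * f i : ℝ) : ℂ)) * Vᴴ) * Xᴴ *
            (X * (V * diagonal (fun i => ((f i * f i : ℝ) : ℂ)) * Vᴴ) * Xᴴ)
          = X * V * diagonal (fun i => ((f i * f i : ℝ) : ℂ)) * (Vᴴ * Xᴴ * (X * V)) *
            diagonal (fun i => ((f i * f i : ℝ) : ℂ)) * Vᴴ * Xᴴ := by noncomm_ring
        _ = X * V * (diagonal (fun i => ((f i * f i : ℝ) : ℂ)) * diagonal (Complex.ofReal ∘ lam) *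
            diagonal (fun i => ((f i * f i : ℝ) : ℂ))) * Vᴴ * Xᴴ := by rw [hmid]; noncomm_ring
        _ = X * (V * diagonal (fun i => ((f i * f i : ℝ) : ℂ)) * Vᴴ) * Xᴴ := by
            rw [diagonal_mul_diagonal, diagonal_mul_diagonal,
              show (fun i => ((f i * f i : ℝ) : ℂ) * (Complex.ofReal ∘ lam) i *
                  ((f i * f i : ℝ) : ℂ)) = fun i => ((f i * f i : ℝ) : ℂ) from
                funext fun i => by
                  simp only [Function.comp_apply]
                  have h2 : f i * f i * lam i * (f i * f i) = f i * f i := by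
                    by_cases hl : lam i = 0
                    · simp [hf, hl]
                    · have := hffl i
                      rw [if_neg hl] at this
                      nlinarith [this]
                  norm_cast]
            noncomm_ring
    have hfix : (1 - Q)ᴴ * (1 - Q) = 1 - Q := by
      rw [conjTranspose_sub, conjTranspose_one, hQH.eq]
      calc (1 - Q) * (1 - Q) = 1 - Q - Q + Q * Q := by noncomm_ring
        _ = 1 - Q := by rw [hQQ]; abel
    exact hfix ▸ posSemidef_conjTranspose_mul_self (1 - Q)
  · rw [msqrt_ctm]
    calc W * X = V * F * (Vᴴ * Xᴴ * (X * V)) * Vᴴ := by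
          rw [hW]
          have hins : V * F * Vᴴ * Xᴴ * X = V * F * Vᴴ * Xᴴ * X * (V * Vᴴ) := by
            rw [hVV', mul_one]
          rw [hins]; noncomm_ring
      _ = V * (F * diagonal (Complex.ofReal ∘ lam)) * Vᴴ := by rw [hmid]; noncomm_ring
      _ = _ := by
          rw [hF, diagonal_mul_diagonal]
          congr 1; congr 1
          exact diag_funext fun i => by
            simp only [Function.comp_apply, ← hlam]
            by_cases hl : lam i = 0
            · simp [hf, hl]
            · have hpos : 0 < lam i := lt_of_le_of_ne (hlam0 i) (Ne.symm hl)
              have hs : Real.sqrt (lam i) ≠ 0 := by positivity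
              simp only [hf, hl, if_false]
              norm_cast
              rw [inv_mul_eq_div, div_eq_iff hs]
              exact (Real.mul_self_sqrt hpos.le).symm


lemma tnorm_triangle (X Y : Matrix m m ℂ) : tnorm (X + Y) ≤ tnorm X + tnorm Y := by
  obtain ⟨W, hW1, _, hWX⟩ := exists_polar (X + Y)
  have h1 : tnorm (X + Y) = ((W * (X + Y)).trace).re := congrArg (fun M : Matrix m m ℂ => (M.trace).re) hWX.symm
  rw [h1, mul_add, trace_add, Complex.add_re]
  exact add_le_add (retrace_le_tnorm W X hW1) (retrace_le_tnorm W Y hW1)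

lemma fnorm_nonneg (X : Matrix m m ℂ) : 0 ≤ fnorm X := Real.sqrt_nonneg _

lemma sum_cs (a b : m → ℝ) :
    ∑ i, a i * b i ≤ Real.sqrt (∑ i, a i ^ 2) * Real.sqrt (∑ i, b i ^ 2) := by
  have h := Finset.sum_mul_sq_le_sq_mul_sq Finset.univ a b
  calc ∑ i, a i * b i ≤ |∑ i, a i * b i| := le_abs_self _
    _ = Real.sqrt ((∑ i, a i * b i) ^ 2) := (Real.sqrt_sq_eq_abs _).symm
    _ ≤ Real.sqrt ((∑ i, a i ^ 2) * (∑ i, b i ^ 2)) := Real.sqrt_le_sqrt h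
    _ = _ := Real.sqrt_mul (Finset.sum_nonneg fun i _ => sq_nonneg _) _

lemma entry_dot (M A : Matrix m m ℂ) (i : m) :
    (M * A) i i = star ((Mᴴ)ᵀ i) ⬝ᵥ (Aᵀ i) := by
  simp [mul_apply, dotProduct, conjTranspose_apply, transpose_apply]

lemma sum_col_sq (A : Matrix m m ℂ) :
    ∑ i, cnorm (Aᵀ i) ^ 2 = ((Aᴴ * A).trace).re := by
  rw [trace_re_sum]
  apply Finset.sum_congr rfl
  intro i _
  rw [cnorm_sq]
  congr 1

lemma tnorm_mul_le (B A : Matrix m m ℂ) : tnorm (B * A) ≤ fnorm B * fnorm A := by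
  obtain ⟨W, _, hW2, hWX⟩ := exists_polar (B * A)
  have h1 : tnorm (B * A) = ((W * (B * A)).trace).re := congrArg (fun M : Matrix m m ℂ => (M.trace).re) hWX.symm
  set M := W * B with hM
  have h2 : W * (B * A) = M * A := by rw [hM, mul_assoc]
  rw [h1, h2, trace_re_sum]
  have h3 : ∀ i, ((M * A) i i).re ≤ cnorm ((Mᴴ)ᵀ i) * cnorm (Aᵀ i) := by
    intro i
    rw [entry_dot]
    exact re_dot_le _ _
  calc ∑ i, ((M * A) i i).re ≤ ∑ i, cnorm ((Mᴴ)ᵀ i) * cnorm (Aᵀ i) :=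
        Finset.sum_le_sum fun i _ => h3 i
    _ ≤ Real.sqrt (∑ i, cnorm ((Mᴴ)ᵀ i) ^ 2) * Real.sqrt (∑ i, cnorm (Aᵀ i) ^ 2) := sum_cs _ _
    _ ≤ fnorm B * fnorm A := by
        rw [sum_col_sq, sum_col_sq, conjTranspose_conjTranspose]
        apply mul_le_mul_of_nonneg_right _ (Real.sqrt_nonneg _)
        · apply Real.sqrt_le_sqrt
          -- re Tr(M * Mᴴ) ≤ re Tr(Bᴴ * B)
          have e1 : (M * Mᴴ).trace = (Mᴴ * M).trace := trace_mul_comm M Mᴴ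
          have e2 : Bᴴ * (1 - Wᴴ * W) * B = Bᴴ * B - Mᴴ * M := by rw [hM, conjTranspose_mul]; noncomm_ring
          have e3 := psd_trace_re_nonneg (hW2.conjTranspose_mul_mul_same B)
          rw [e2, trace_sub, Complex.sub_re] at e3
          rw [e1]
          linarith

lemma fnorm_sq_eq (X : Matrix m m ℂ) : fnorm X ^ 2 = ((Xᴴ * X).trace).re :=
  Real.sq_sqrt (psd_trace_re_nonneg (posSemidef_conjTranspose_mul_self X))


lemma conj_mul3 {V : Matrix m m ℂ} (hVV' : V * Vᴴ = 1) (A B C : Matrix m m ℂ) :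
    (Vᴴ * A * V) * (Vᴴ * B * V) * (Vᴴ * C * V) = Vᴴ * (A * B * C) * V := by
  have h1 : Vᴴ * A * (V * Vᴴ) * B * (V * Vᴴ) * C * V = Vᴴ * (A * B * C) * V := by
    rw [hVV']; noncomm_ring
  rw [← h1]; noncomm_ring

lemma conj_mul2 {V : Matrix m m ℂ} (hVV' : V * Vᴴ = 1) (A B : Matrix m m ℂ) :
    (Vᴴ * A * V) * (Vᴴ * B * V) = Vᴴ * (A * B) * V := by
  have h1 : Vᴴ * A * (V * Vᴴ) * B * V = Vᴴ * (A * B) * V := by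
    rw [hVV']; noncomm_ring
  rw [← h1]; noncomm_ring

lemma trace_dMd (a b : m → ℝ) (M : Matrix m m ℂ) :
    ((diagonal (fun i => (a i : ℂ)) * M * diagonal (fun i => (b i : ℂ))).trace).re
      = ∑ i, a i * b i * (M i i).re := by
  rw [trace_re_sum]
  apply Finset.sum_congr rfl
  intro i _
  rw [mul_diagonal, diagonal_mul]
  rw [show ((a i : ℂ) * M i i * (b i : ℂ)) = ((a i * b i : ℝ) : ℂ) * M i i by push_cast; ring]
  rw [Complex.re_ofReal_mul]

lemma powers_stormer {S T : Matrix m m ℂ} (hS : S.PosSemidef) (hT : T.PosSemidef) :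
    (((S - T) * (S - T)).trace).re ≤ tnorm (S * S - T * T) := by
  have hD : (S - T).IsHermitian := hS.1.sub hT.1
  set mu := hD.eigenvalues with hmu
  set V : Matrix m m ℂ := (hD.eigenvectorUnitary : Matrix m m ℂ) with hV
  have hVV : Vᴴ * V = 1 := V_conj_mul hD
  have hVV' : V * Vᴴ = 1 := V_mul_conj hD
  set s : m → ℝ := fun i => if mu i < 0 then -1 else 1 with hs
  set U : Matrix m m ℂ := V * diagonal (fun i => (s i : ℂ)) * Vᴴ with hU
  have hss : ∀ i, (s i : ℂ) * (s i : ℂ) = 1 := by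
    intro i
    by_cases h' : mu i < 0 <;> simp [hs, h']
  have hUU : U * Uᴴ = 1 := by
    have hUH : Uᴴ = U := by
      rw [hU]
      simp only [conjTranspose_mul, conjTranspose_conjTranspose, diagonal_conjTranspose]
      rw [show (star (fun i => (s i : ℂ))) = fun i => (s i : ℂ) from funext fun i => by simp]
      noncomm_ring
    rw [hUH, hU]
    have hc : V * diagonal (fun i => (s i : ℂ)) * Vᴴ * (V * diagonal (fun i => (s i : ℂ)) * Vᴴ)
        = V * (diagonal (fun i => (s i : ℂ)) * diagonal (fun i => (s i : ℂ))) * Vᴴ := by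
      calc V * diagonal (fun i => (s i : ℂ)) * Vᴴ * (V * diagonal (fun i => (s i : ℂ)) * Vᴴ)
          = V * diagonal (fun i => (s i : ℂ)) * (Vᴴ * V) * diagonal (fun i => (s i : ℂ)) * Vᴴ := by
            noncomm_ring
        _ = _ := by rw [hVV]; noncomm_ring
    rw [hc, diagonal_mul_diagonal,
      show (fun i => (s i : ℂ) * (s i : ℂ)) = fun _ => (1 : ℂ) from funext fun i => hss i,
      diagonal_one, mul_one, hVV']
  have hcontr : ((1 : Matrix m m ℂ) - U * Uᴴ).PosSemidef := by
    rw [hUU, sub_self]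
    exact Matrix.PosSemidef.zero
  have hUV : Vᴴ * U * V = diagonal (fun i => (s i : ℂ)) := by
    rw [hU]
    calc Vᴴ * (V * diagonal (fun i => (s i : ℂ)) * Vᴴ) * V
        = (Vᴴ * V) * diagonal (fun i => (s i : ℂ)) * (Vᴴ * V) := by noncomm_ring
      _ = _ := by rw [hVV]; noncomm_ring
  have hDVl : Vᴴ * (S - T) * V = diagonal (fun i => (mu i : ℂ)) := spectral_conj hD
  set S' : Matrix m m ℂ := Vᴴ * S * V with hS'd
  set T' : Matrix m m ℂ := Vᴴ * T * V with hT'd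
  have hS' : S'.PosSemidef := hS.conjTranspose_mul_mul_same V
  have hT' : T'.PosSemidef := hT.conjTranspose_mul_mul_same V
  -- diagonal entries
  have hab : ∀ i, (S' i i).re - (T' i i).re = mu i := by
    intro i
    have h1 : S' - T' = Vᴴ * (S - T) * V := by rw [hS'd, hT'd]; noncomm_ring
    have h2 : (S' - T') i i = (mu i : ℂ) := by rw [h1, hDVl, diagonal_apply_eq]
    have := congrArg Complex.re h2
    simpa using this
  -- trace computations
  have split : U * (S * S - T * T) = U * S * (S - T) + U * (S - T) * T := by noncomm_ring
  have key1 : ((U * S * (S - T)).trace).re = ∑ i, s i * mu i * (S' i i).re := by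
    rw [← trace_conj hD (U * S * (S - T)), ← conj_mul3 hVV' U S (S - T), hUV, hDVl, ← hS'd]
    rw [trace_re_sum]
    apply Finset.sum_congr rfl
    intro i _
    rw [mul_diagonal, diagonal_mul]
    rw [show ((s i : ℂ) * S' i i * (mu i : ℂ)) = ((s i * mu i : ℝ) : ℂ) * S' i i by
      push_cast; ring]
    rw [Complex.re_ofReal_mul]
  have key2 : ((U * (S - T) * T).trace).re = ∑ i, s i * mu i * (T' i i).re := by
    rw [← trace_conj hD (U * (S - T) * T), ← conj_mul3 hVV' U (S - T) T, hUV, hDVl, ← hT'd]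
    rw [trace_re_sum]
    simp only [diagonal_mul_diagonal]
    apply Finset.sum_congr rfl
    intro i _
    rw [diagonal_mul]
    rw [show ((s i : ℂ) * (mu i : ℂ) * T' i i) = ((s i * mu i : ℝ) : ℂ) * T' i i by
      push_cast; ring]
    rw [Complex.re_ofReal_mul]
  have key3 : (((S - T) * (S - T)).trace).re = ∑ i, mu i ^ 2 := by
    rw [← trace_conj hD ((S - T) * (S - T)), ← conj_mul2 hVV' (S - T) (S - T), hDVl,
      diagonal_mul_diagonal, trace_diagonal, Complex.re_sum]
    apply Finset.sum_congr rfl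
    intro i _
    rw [show ((mu i : ℂ) * (mu i : ℂ)) = ((mu i ^ 2 : ℝ) : ℂ) by push_cast; ring]
    rw [Complex.ofReal_re]
  have lower : ∑ i, mu i ^ 2 ≤ ((U * (S * S - T * T)).trace).re := by
    rw [split, trace_add, Complex.add_re, key1, key2, ← Finset.sum_add_distrib]
    apply Finset.sum_le_sum
    intro i _
    have ha := psd_diag_re_nonneg hS' i
    have hb := psd_diag_re_nonneg hT' i
    have habi := hab i
    have hsm : s i * mu i = |mu i| := by
      by_cases h' : mu i < 0
      · simp [hs, h', abs_of_neg h']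
      · simp [hs, h', _root_.abs_of_nonneg (le_of_not_gt h')]
    have habs : |mu i| ≤ (S' i i).re + (T' i i).re := by
      rw [abs_le]; constructor <;> linarith
    calc mu i ^ 2 = |mu i| * |mu i| := by rw [abs_mul_abs_self, sq]
      _ ≤ |mu i| * ((S' i i).re + (T' i i).re) :=
          mul_le_mul_of_nonneg_left habs (abs_nonneg _)
      _ = s i * mu i * (S' i i).re + s i * mu i * (T' i i).re := by rw [hsm]; ring
  rw [key3]
  exact le_trans lower (retrace_le_tnorm U (S * S - T * T) hcontr)


lemma fid_eq_tnorm {ρ σ : Matrix m m ℂ} (hρ : ρ.PosSemidef) (hσ : σ.PosSemidef) :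
    Fid ρ σ = tnorm (msqrt σ * msqrt ρ) := by
  have hAH : (msqrt ρ)ᴴ = msqrt ρ := by rw [msqrt_eq hρ]; exact (sqrtE_psd hρ).1
  have hSH : (msqrt σ)ᴴ = msqrt σ := by rw [msqrt_eq hσ]; exact (sqrtE_psd hσ).1
  have hSS : msqrt σ * msqrt σ = σ := by rw [msqrt_eq hσ]; exact sqrtE_mul_self hσ
  have key : (msqrt σ * msqrt ρ)ᴴ * (msqrt σ * msqrt ρ) = msqrt ρ * σ * msqrt ρ := by
    rw [conjTranspose_mul, hAH, hSH]
    calc msqrt ρ * msqrt σ * (msqrt σ * msqrt ρ)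
        = msqrt ρ * (msqrt σ * msqrt σ) * msqrt ρ := by noncomm_ring
      _ = _ := by rw [hSS]
  show ((msqrt (msqrt ρ * σ * msqrt ρ)).trace).re =
    ((msqrt ((msqrt σ * msqrt ρ)ᴴ * (msqrt σ * msqrt ρ))).trace).re
  rw [key]

lemma tnorm_sub_eq_two_trDist (σ τ : Matrix m m ℂ) : tnorm (σ - τ) = 2 * trDist σ τ := by
  show ((msqrt ((σ - τ)ᴴ * (σ - τ))).trace).re = 2 * ((1 / 2) *
    ((msqrt ((σ - τ)ᴴ * (σ - τ))).trace).re)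
  ring

end Stmt3Aux
end Aux


/-- For density matrices ρ, σ, τ on ℂⁿ and ε ≥ 0, if `Δ(σ,τ) ≤ ε`
then `F(ρ,σ) ≥ F(ρ,τ) − √(2ε)`. -/
theorem stmt3 {n : ℕ} (ρ σ τ : Matrix (Fin n) (Fin n) ℂ)
    (hρ : IsDensityMatrix ρ) (hσ : IsDensityMatrix σ) (hτ : IsDensityMatrix τ)
    (ε : ℝ) (hε : 0 ≤ ε) (h : trDist σ τ ≤ ε) :
    Fid ρ σ ≥ Fid ρ τ - Real.sqrt (2 * ε) := by
  open Stmt3Aux in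
  obtain ⟨hρp, hρt⟩ := hρ
  obtain ⟨hσp, hσt⟩ := hσ
  obtain ⟨hτp, hτt⟩ := hτ
  set A := msqrt ρ with hA
  set S := msqrt σ with hS
  set T := msqrt τ with hT
  have hAH : Aᴴ = A := by rw [hA, msqrt_eq hρp]; exact (sqrtE_psd hρp).1
  have hSH : Sᴴ = S := by rw [hS, msqrt_eq hσp]; exact (sqrtE_psd hσp).1
  have hTH : Tᴴ = T := by rw [hT, msqrt_eq hτp]; exact (sqrtE_psd hτp).1
  have hSp : S.PosSemidef := by rw [hS, msqrt_eq hσp]; exact sqrtE_psd hσp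
  have hTp : T.PosSemidef := by rw [hT, msqrt_eq hτp]; exact sqrtE_psd hτp
  have hAA : A * A = ρ := by rw [hA, msqrt_eq hρp]; exact sqrtE_mul_self hρp
  have hSS : S * S = σ := by rw [hS, msqrt_eq hσp]; exact sqrtE_mul_self hσp
  have hTT : T * T = τ := by rw [hT, msqrt_eq hτp]; exact sqrtE_mul_self hτp
  have hfidσ : Fid ρ σ = tnorm (S * A) := fid_eq_tnorm hρp hσp
  have hfidτ : Fid ρ τ = tnorm (T * A) := fid_eq_tnorm hρp hτp
  -- triangle step
  have htri : Fid ρ τ ≤ Fid ρ σ + tnorm ((T - S) * A) := by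
    have hdecomp : T * A = S * A + (T - S) * A := by noncomm_ring
    rw [hfidσ, hfidτ, hdecomp]
    exact tnorm_triangle (S * A) ((T - S) * A)
  -- Cauchy-Schwarz step
  have hfA : fnorm A = 1 := by
    rw [fnorm, hAH, hAA, hρt]
    simp
  have hCS : tnorm ((T - S) * A) ≤ fnorm (T - S) := by
    have := tnorm_mul_le (T - S) A
    rwa [hfA, mul_one] at this
  -- Powers-Stormer step
  have hPS : fnorm (T - S) ^ 2 ≤ 2 * ε := by
    rw [fnorm_sq_eq]
    have h1 : (T - S)ᴴ * (T - S) = (S - T) * (S - T) := by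
      rw [conjTranspose_sub, hSH, hTH]
      noncomm_ring
    rw [h1]
    calc (((S - T) * (S - T)).trace).re ≤ tnorm (S * S - T * T) := powers_stormer hSp hTp
      _ = tnorm (σ - τ) := by rw [hSS, hTT]
      _ = 2 * trDist σ τ := tnorm_sub_eq_two_trDist σ τ
      _ ≤ 2 * ε := by linarith
  have hfTS : fnorm (T - S) ≤ Real.sqrt (2 * ε) := by
    calc fnorm (T - S) = Real.sqrt (fnorm (T - S) ^ 2) :=
          (Real.sqrt_sq (fnorm_nonneg _)).symm
      _ ≤ Real.sqrt (2 * ε) := Real.sqrt_le_sqrt hPS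
  linarith
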